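/- arXiv:1308.2520 — 3 statements merged into one kernel-verified Lean document; each statement's English description precedes it below -/
import Mathlib

section
/- A family {K_i : i ∈ I} of convex cones in a Banach space X has the normal property if and only if it has the closed intersection property and the family of closures {cl(K_i) : i ∈ I} has the normal property. -/
open Set Metric
open scoped Pointwise

noncomputable section

/-- The recession cone `0⁺A = {x | A + t • x ⊆ A for all t ≥ 0}`. -/
def recCone {X : Type*} [AddCommGroup X] [Module ℝ X] (A : Set X) : Set X :=
  {x | ∀ t : ℝ, 0 ≤ t → ∀ a ∈ A, a + t • x ∈ A}

/-- The inverse sum `B₁ # B₂`. -/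
def invSum {X : Type*} [AddCommGroup X] [Module ℝ X] (B₁ B₂ : Set X) : Set X :=
  (⋃ t ∈ Set.Ioo (0:ℝ) 1, (t • B₁ ∩ (1 - t) • B₂)) ∪ (B₁ ∩ recCone B₂) ∪ (B₂ ∩ recCone B₁)

/-- The polar `A° = {x* | ⟨x*, x⟩ ≤ 1 ∀ x ∈ A}` of a set in `X`, a subset of the dual. -/
def pol {X : Type*} [NormedAddCommGroup X] [NormedSpace ℝ X] (A : Set X) :
    Set (X →L[ℝ] ℝ) := {f | ∀ x ∈ A, f x ≤ 1}

/-- The dual cone (negative polar) `A^⊖ = {x* | ⟨x*, x⟩ ≤ 0 ∀ x ∈ A}`. -/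
def dCone {X : Type*} [NormedAddCommGroup X] [NormedSpace ℝ X] (A : Set X) :
    Set (X →L[ℝ] ℝ) := {f | ∀ x ∈ A, f x ≤ 0}

/-- The weak* closure of a set of continuous linear functionals. -/
def wcl {X : Type*} [NormedAddCommGroup X] [NormedSpace ℝ X]
    (S : Set (X →L[ℝ] ℝ)) : Set (X →L[ℝ] ℝ) :=
  {f | StrongDual.toWeakDual (𝕜 := ℝ) (E := X) f ∈
    closure (StrongDual.toWeakDual (𝕜 := ℝ) (E := X) '' S)}

/-- The set of all finite sums `Σ_{i ∈ I₀} x_i` with `x_i ∈ P i`, `I₀ ⊆ I` finite. -/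
def finSums {X : Type*} [NormedAddCommGroup X] [NormedSpace ℝ X] {I : Type*}
    (P : I → Set (X →L[ℝ] ℝ)) : Set (X →L[ℝ] ℝ) :=
  {g | ∃ (s : Finset I) (x : I → (X →L[ℝ] ℝ)), (∀ i ∈ s, x i ∈ P i) ∧ g = ∑ i ∈ s, x i}

/-- The extended Jameson property `(G_η)`: every `f` in the weak* closure of the set of
finite sums of the `P i` is a weak* limit (i.e. lies in the weak* closure) of finite sums
`Σ_{i ∈ s} x_i`, `x_i ∈ P i`, with `Σ_{i ∈ s} ‖x_i‖ ≤ (1/η) ‖f‖`. -/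
def propG {X : Type*} [NormedAddCommGroup X] [NormedSpace ℝ X] {I : Type*}
    (P : I → Set (X →L[ℝ] ℝ)) (η : ℝ) : Prop :=
  ∀ f ∈ wcl (finSums P),
    f ∈ wcl {g | ∃ (s : Finset I) (x : I → (X →L[ℝ] ℝ)),
      (∀ i ∈ s, x i ∈ P i) ∧ g = ∑ i ∈ s, x i ∧ ∑ i ∈ s, ‖x i‖ ≤ (1 / η) * ‖f‖}

/-- The normal cone `N(C, x) = {x* | ⟨x*, c − x⟩ ≤ 0 ∀ c ∈ C}`. -/
def ncone {X : Type*} [NormedAddCommGroup X] [NormedSpace ℝ X] (C : Set X) (x : X) :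
    Set (X →L[ℝ] ℝ) := {f | ∀ c ∈ C, f (c - x) ≤ 0}

/-- The conical hull of a convex set `S`: `cone S = {t • s | t ≥ 0, s ∈ S}`. -/
def coneHull {X : Type*} [AddCommGroup X] [Module ℝ X] (S : Set X) : Set X :=
  {y | ∃ t : ℝ, 0 ≤ t ∧ ∃ s ∈ S, y = t • s}

end

/-
The normal property is invariant under scaling: since every `K i` and `⋂ i, K i` are cones,
`K + closedBall 0 (r * ρ) = r • (K + closedBall 0 ρ)` for `r > 0`, so normality with constant `η`
gives `⋂ i, (K i + closedBall 0 (r * η)) ⊆ ⋂ i, K i + closedBall 0 r` at every scale `r`.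
Letting `r → 0` shows that a point of `⋂ i, closure (K i)` is a limit of points of `⋂ i, K i`;
and passing between `K i` and `closure (K i)` costs only an arbitrarily small enlargement of the
balls, which the scaling absorbs at the price of halving `η`.
-/

section Pointwise

variable {X : Type*}

lemma mem_add_closedBall_zero_iff [SeminormedAddCommGroup X] {s : Set X} {x : X} {r : ℝ} :
    x ∈ s + closedBall 0 r ↔ ∃ y ∈ s, ‖x - y‖ ≤ r := by
  constructor
  · rintro ⟨y, hy, b, hb, rfl⟩
    exact ⟨y, hy, by simpa using mem_closedBall_zero_iff.1 hb⟩
  · rintro ⟨y, hy, h⟩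
    exact ⟨y, hy, x - y, mem_closedBall_zero_iff.2 h, add_sub_cancel y x⟩

variable [NormedAddCommGroup X]

lemma closure_add_closedBall_subset {s : Set X} {δ ε : ℝ} (h : δ < ε) :
    closure s + closedBall 0 δ ⊆ s + closedBall 0 ε := by
  rintro _ ⟨c, hc, b, hb, rfl⟩
  obtain ⟨y, hy, hcy⟩ := Metric.mem_closure_iff.1 hc (ε - δ) (sub_pos.2 h)
  refine mem_add_closedBall_zero_iff.2 ⟨y, hy, ?_⟩
  rw [dist_eq_norm] at hcy
  calc ‖c + b - y‖ = ‖(c - y) + b‖ := by rw [add_sub_right_comm]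
    _ ≤ ‖c - y‖ + ‖b‖ := norm_add_le _ _
    _ ≤ ε := by linarith [mem_closedBall_zero_iff.1 hb]

lemma closure_subset_add_closedBall {s : Set X} {ε : ℝ} (hε : 0 < ε) :
    closure s ⊆ s + closedBall 0 ε := by
  simpa using closure_add_closedBall_subset (s := s) hε

variable [NormedSpace ℝ X]

lemma smul_set_eq_self_of_cone {K : Set X} (hK : ∀ t : ℝ, 0 ≤ t → t • K ⊆ K) {r : ℝ}
    (hr : 0 < r) : r • K = K :=
  (hK r hr.le).antisymm ((subset_smul_set_iff₀ hr.ne').2 (hK r⁻¹ (inv_nonneg.2 hr.le)))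

lemma smul_add_closedBall_of_cone {K : Set X} (hK : ∀ t : ℝ, 0 ≤ t → t • K ⊆ K) {r : ℝ}
    (hr : 0 < r) (ρ : ℝ) : r • (K + closedBall 0 ρ) = K + closedBall 0 (r * ρ) := by
  rw [smul_add, smul_set_eq_self_of_cone hK hr, smul_closedBall' hr.ne', smul_zero,
    Real.norm_of_nonneg hr.le]

end Pointwise

section NormalProperty

variable {X : Type*} [NormedAddCommGroup X] {I : Type*} {K : I → Set X}

lemma iInter_closure_add_closedBall_subset_of_normal {η : ℝ}
    (hN : ⋂ i, (K i + closedBall 0 η) ⊆ (⋂ i, K i) + closedBall 0 1) (hη : 0 < η) :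
    ⋂ i, (closure (K i) + closedBall 0 (η / 2)) ⊆ (⋂ i, closure (K i)) + closedBall 0 1 :=
  calc ⋂ i, (closure (K i) + closedBall 0 (η / 2))
      ⊆ ⋂ i, (K i + closedBall 0 η) :=
        iInter_mono fun _ => closure_add_closedBall_subset (half_lt_self hη)
    _ ⊆ (⋂ i, K i) + closedBall 0 1 := hN
    _ ⊆ (⋂ i, closure (K i)) + closedBall 0 1 :=
        add_subset_add_right (iInter_mono fun _ => subset_closure)

variable [NormedSpace ℝ X]

lemma iInter_add_closedBall_subset_of_normal (hK : ∀ i, ∀ t : ℝ, 0 ≤ t → t • K i ⊆ K i)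
    {η : ℝ} (hN : ⋂ i, (K i + closedBall 0 η) ⊆ (⋂ i, K i) + closedBall 0 1)
    {r : ℝ} (hr : 0 < r) :
    ⋂ i, (K i + closedBall 0 (r * η)) ⊆ (⋂ i, K i) + closedBall 0 r := by
  have hKint : ∀ t : ℝ, 0 ≤ t → t • ⋂ i, K i ⊆ ⋂ i, K i := fun t ht =>
    smul_set_iInter_subset t K |>.trans (iInter_mono fun i => hK i t ht)
  intro x hx
  have hx' : r⁻¹ • x ∈ ⋂ i, (K i + closedBall 0 η) := mem_iInter.2 fun i => by
    rw [← mem_smul_set_iff_inv_smul_mem₀ hr.ne', smul_add_closedBall_of_cone (hK i) hr]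
    exact mem_iInter.1 hx i
  rw [← mul_one r, ← smul_add_closedBall_of_cone hKint hr,
    mem_smul_set_iff_inv_smul_mem₀ hr.ne']
  exact hN hx'

lemma closure_iInter_eq_of_normal (hK : ∀ i, ∀ t : ℝ, 0 ≤ t → t • K i ⊆ K i) {η : ℝ}
    (hη : 0 < η) (hN : ⋂ i, (K i + closedBall 0 η) ⊆ (⋂ i, K i) + closedBall 0 1) :
    closure (⋂ i, K i) = ⋂ i, closure (K i) := by
  refine (subset_iInter fun i => closure_mono (iInter_subset K i)).antisymm fun x hx =>
    Metric.mem_closure_iff.2 fun ε hε => ?_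
  have hxε : x ∈ ⋂ i, (K i + closedBall 0 (ε / 2 * η)) := mem_iInter.2 fun i =>
    closure_subset_add_closedBall (by positivity) (mem_iInter.1 hx i)
  obtain ⟨y, hy, hxy⟩ := mem_add_closedBall_zero_iff.1
    (iInter_add_closedBall_subset_of_normal hK hN (half_pos hε) hxε)
  exact ⟨y, hy, by rw [dist_eq_norm]; linarith⟩

lemma iInter_add_closedBall_subset_of_closure_normal
    (hK : ∀ i, ∀ t : ℝ, 0 ≤ t → t • K i ⊆ K i)
    (hcl : closure (⋂ i, K i) = ⋂ i, closure (K i)) {η : ℝ}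
    (hN : ⋂ i, (closure (K i) + closedBall 0 η) ⊆ (⋂ i, closure (K i)) + closedBall 0 1) :
    ⋂ i, (K i + closedBall 0 (η / 2)) ⊆ (⋂ i, K i) + closedBall 0 1 := by
  have hKcl : ∀ i, ∀ t : ℝ, 0 ≤ t → t • closure (K i) ⊆ closure (K i) := fun i t ht =>
    (smul_closure_subset t (K i)).trans (closure_mono (hK i t ht))
  calc ⋂ i, (K i + closedBall 0 (η / 2))
      ⊆ ⋂ i, (closure (K i) + closedBall 0 (1 / 2 * η)) := iInter_mono fun _ => by
        rw [one_div_mul_eq_div]; exact add_subset_add_right subset_closure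
    _ ⊆ (⋂ i, closure (K i)) + closedBall 0 (1 / 2) :=
        iInter_add_closedBall_subset_of_normal hKcl hN one_half_pos
    _ ⊆ (⋂ i, K i) + closedBall 0 1 := hcl ▸ closure_add_closedBall_subset one_half_lt_one

end NormalProperty

theorem stmt10_general {X : Type*} [NormedAddCommGroup X] [NormedSpace ℝ X]
    {I : Type*} (K : I → Set X)
    (hcone_smul : ∀ i, ∀ t : ℝ, 0 ≤ t → t • K i ⊆ K i) :
    (∃ η > (0:ℝ),
        (⋂ i, (K i + η • closedBall (0:X) 1)) ⊆ (⋂ i, K i) + closedBall (0:X) 1) ↔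
      (closure (⋂ i, K i) = (⋂ i, closure (K i)) ∧
        ∃ η > (0:ℝ), (⋂ i, (closure (K i) + η • closedBall (0:X) 1)) ⊆
          (⋂ i, closure (K i)) + closedBall (0:X) 1) := by
  have hball : ∀ η > (0:ℝ), η • closedBall (0:X) 1 = closedBall 0 η := fun η hη =>
    smul_unitClosedBall_of_nonneg hη.le
  constructor
  · rintro ⟨η, hη, hN⟩
    rw [hball η hη] at hN
    refine ⟨closure_iInter_eq_of_normal hcone_smul hη hN, η / 2, half_pos hη, ?_⟩
    rw [hball _ (half_pos hη)]
    exact iInter_closure_add_closedBall_subset_of_normal hN hη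
  · rintro ⟨hcl, η, hη, hN⟩
    rw [hball η hη] at hN
    refine ⟨η / 2, half_pos hη, ?_⟩
    rw [hball _ (half_pos hη)]
    exact iInter_add_closedBall_subset_of_closure_normal hcone_smul hcl hN

theorem stmt10 {X : Type*} [NormedAddCommGroup X] [NormedSpace ℝ X] [CompleteSpace X]
    {I : Type*} [Nonempty I] (K : I → Set X)
    (hcone_smul : ∀ i, ∀ t : ℝ, 0 ≤ t → t • K i ⊆ K i)
    (hcone_add : ∀ i, K i + K i ⊆ K i) (h0 : ∀ i, (0 : X) ∈ K i) :
    (∃ η > (0:ℝ),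
        (⋂ i, (K i + η • closedBall (0:X) 1)) ⊆ (⋂ i, K i) + closedBall (0:X) 1) ↔
      (closure (⋂ i, K i) = (⋂ i, closure (K i)) ∧
        ∃ η > (0:ℝ), (⋂ i, (closure (K i) + η • closedBall (0:X) 1)) ⊆
          (⋂ i, closure (K i)) + closedBall (0:X) 1) :=
  stmt10_general K hcone_smul
end

section
/- Let {A_i : i ∈ I} be a family of convex subsets of a Banach space X with 0 ∈ ⋂_i A_i and satisfying the closed intersection property, and let η > 0. If ⋂_i (A_i + η·B_X) ⊆ (⋂_i A_i) + B_X, then for every η̂ ∈ (0, η): B_{X*} # cl^{w*}co(⋃_i A_i°) ⊆ cl^{w*}co(⋃_i (A_i° # (1/η̂)·B_{X*})). -/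
open Set Metric
open scoped Pointwise

/-! The hypothesis says that `⋂ᵢ Aᵢ + B_X` swallows `⋂ᵢ (Aᵢ + η B_X)`, hence also the closed
convex sets `Dᵢ = cl (Aᵢ + η̂ B_X)`. So every `f ∈ B_{X*} # W`, `W = cl^{w*}co ⋃ᵢ Aᵢ°`, which is
bounded by `1` on `B_X + ⋂ᵢ Aᵢ`, lies in `(⋂ᵢ Dᵢ)°`. By the bipolar theorem and a weak*
separation, `(⋂ᵢ Dᵢ)° ⊆ cl^{w*}co ⋃ᵢ Dᵢ°`, and `Dᵢ° ⊆ (Aᵢ + η̂ B_X)° ⊆ Aᵢ° # (1/η̂) B_{X*}`: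
a functional bounded by `1` on `Aᵢ + η̂ B_X` satisfies `f a + η̂ ‖f‖ ≤ 1` on `Aᵢ`, so it splits
as `(1 - η̂‖f‖)`-times an element of `Aᵢ°` and `η̂‖f‖`-times an element of `(1/η̂) B_{X*}`. -/

section Polar

variable {X : Type*} [NormedAddCommGroup X] [NormedSpace ℝ X]

lemma zero_mem_pol (K : Set X) : (0 : X →L[ℝ] ℝ) ∈ pol K :=
  fun _ _ => zero_le_one

lemma pol_anti {K L : Set X} (h : K ⊆ L) : pol L ⊆ pol K :=
  fun _ hf x hx => hf x (h hx)

lemma convex_pol (K : Set X) : Convex ℝ (pol K) := by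
  intro f hf g hg a b ha hb hab x hx
  calc a * f x + b * g x ≤ a * 1 + b * 1 := by gcongr <;> [exact hf x hx; exact hg x hx]
  _ = 1 := by rw [mul_one, mul_one, hab]

lemma wcl_mono {S T : Set (X →L[ℝ] ℝ)} (h : S ⊆ T) : wcl S ⊆ wcl T := by
  intro f hf
  show StrongDual.toWeakDual f ∈ closure _
  exact closure_mono (image_mono h) hf

lemma wcl_subset_pol {S : Set (X →L[ℝ] ℝ)} {K : Set X} (h : S ⊆ pol K) : wcl S ⊆ pol K := by
  have hclosed : IsClosed (⋂ x ∈ K, {g : WeakDual ℝ X | g x ≤ 1}) :=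
    isClosed_biInter fun x _ => isClosed_le (WeakDual.eval_continuous x) continuous_const
  intro f hf x hx
  have hsub : StrongDual.toWeakDual '' S ⊆ ⋂ x ∈ K, {g : WeakDual ℝ X | g x ≤ 1} := by
    rintro - ⟨g, hg, rfl⟩
    exact mem_iInter₂.2 (h hg)
  exact mem_iInter₂.1 (closure_minimal hsub hclosed hf) x hx

lemma closedBall_subset_pol_closedBall :
    closedBall (0 : X →L[ℝ] ℝ) 1 ⊆ pol (closedBall (0 : X) 1) := by
  intro f hf x hx
  rw [mem_closedBall_zero_iff] at hf hx
  calc f x ≤ ‖f x‖ := le_abs_self _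
  _ ≤ ‖f‖ * ‖x‖ := f.le_opNorm x
  _ ≤ 1 := mul_le_one₀ hf (norm_nonneg x) hx

lemma zero_mem_recCone {E : Type*} [AddCommGroup E] [Module ℝ E] (B : Set E) :
    (0 : E) ∈ recCone B := by
  intro t _ b hb
  rwa [smul_zero, add_zero]

lemma mem_recCone_pol {K : Set X} {f : X →L[ℝ] ℝ} (hf : ∀ x ∈ K, f x ≤ 0) :
    f ∈ recCone (pol K) := by
  intro t ht g hg x hx
  have : g x + t * f x ≤ 1 := by nlinarith [hg x hx, hf x hx]
  simpa using this

lemma apply_nonpos_of_mem_recCone {B : Set (X →L[ℝ] ℝ)} {K : Set X} (h0 : 0 ∈ B)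
    (hB : B ⊆ pol K) {f : X →L[ℝ] ℝ} (hf : f ∈ recCone B) {x : X} (hx : x ∈ K) : f x ≤ 0 := by
  by_contra! hpos
  have h := hB (by simpa using hf (2 / f x) (by positivity) 0 h0) x hx
  rw [smul_apply, smul_eq_mul, div_mul_cancel₀ _ hpos.ne'] at h
  norm_num at h

lemma invSum_subset_pol_add {B₁ B₂ : Set (X →L[ℝ] ℝ)} {K₁ K₂ : Set X} (h₁ : B₁ ⊆ pol K₁)
    (h₂ : B₂ ⊆ pol K₂) (h0₁ : 0 ∈ B₁) (h0₂ : 0 ∈ B₂) : invSum B₁ B₂ ⊆ pol (K₁ + K₂) := by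
  rintro f ((hf | ⟨hf₁, hf₂⟩) | ⟨hf₂, hf₁⟩) _ ⟨x₁, hx₁, x₂, hx₂, rfl⟩ <;> rw [map_add]
  · obtain ⟨t, ⟨ht0, ht1⟩, ⟨g₁, hg₁, rfl⟩, ⟨g₂, hg₂, hg⟩⟩ := mem_iUnion₂.1 hf
    have hfx₂ : (t • g₁) x₂ = (1 - t) * g₂ x₂ := by
      rw [← show (1 - t) • g₂ = t • g₁ from hg]; rfl
    rw [hfx₂, smul_apply, smul_eq_mul]
    nlinarith [h₁ hg₁ x₁ hx₁, h₂ hg₂ x₂ hx₂]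
  · linarith [h₁ hf₁ x₁ hx₁, apply_nonpos_of_mem_recCone h0₂ h₂ hf₂ hx₂]
  · linarith [h₂ hf₂ x₂ hx₂, apply_nonpos_of_mem_recCone h0₁ h₁ hf₁ hx₁]

end Polar

section Separation

variable {X : Type*} [NormedAddCommGroup X] [NormedSpace ℝ X]

lemma mem_of_forall_mem_pol_apply_le_one {D : Set X} (hD : Convex ℝ D) (hcl : IsClosed D)
    (h0 : (0 : X) ∈ D) {x : X} (hx : ∀ g ∈ pol D, g x ≤ 1) : x ∈ D := by
  by_contra hxD
  obtain ⟨φ, u, hφD, hφx⟩ := geometric_hahn_banach_closed_point hD hcl hxD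
  have hu : 0 < u := by simpa using hφD 0 h0
  have hpol : u⁻¹ • φ ∈ pol D := fun d hd => by
    simpa [inv_mul_le_one₀ hu] using (hφD d hd).le
  have := hx _ hpol
  simp only [smul_apply, smul_eq_mul, inv_mul_le_one₀ hu] at this
  linarith

lemma exists_eq_apply_of_weakDual (ψ : StrongDual ℝ (WeakDual ℝ X)) :
    ∃ x : X, ∀ f : WeakDual ℝ X, ψ f = f x := by
  obtain ⟨x, rfl⟩ := LinearMap.dualEmbedding_surjective (topDualPairing ℝ X) ψ
  exact ⟨x, fun _ => rfl⟩

lemma pol_iInter_subset_wcl_convexHull {I : Type*} [Nonempty I] (D : I → Set X)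
    (hconv : ∀ i, Convex ℝ (D i)) (hcl : ∀ i, IsClosed (D i)) (h0 : ∀ i, (0 : X) ∈ D i) :
    pol (⋂ i, D i) ⊆ wcl (convexHull ℝ (⋃ i, pol (D i))) := by
  have : LocallyConvexSpace ℝ (WeakDual ℝ X) := WeakBilin.locallyConvexSpace
  intro f hf
  set K := closure (StrongDual.toWeakDual '' convexHull ℝ (⋃ i, pol (D i)))
  have hK : Convex ℝ K := ((convex_convexHull ℝ _).linear_image
    (StrongDual.toWeakDual (𝕜 := ℝ) (E := X)).toLinearMap).closure
  have hpolK : ∀ i, ∀ g ∈ pol (D i), StrongDual.toWeakDual g ∈ K := fun i g hg =>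
    subset_closure ⟨g, subset_convexHull ℝ _ (mem_iUnion.2 ⟨i, hg⟩), rfl⟩
  show StrongDual.toWeakDual f ∈ K
  by_contra hfK
  obtain ⟨ψ, u, hψK, hψf⟩ := geometric_hahn_banach_closed_point hK isClosed_closure hfK
  obtain ⟨x, hψ⟩ := exists_eq_apply_of_weakDual ψ
  have hu : 0 < u := by
    simpa using hψK _ (hpolK (Classical.arbitrary I) 0 (zero_mem_pol _))
  -- `ψ = ⟨·, x⟩` stays below `u` on every `(D i)°`, so `u⁻¹ • x ∈ ⋂ i, D i` by the bipolar
  -- theorem, while `f (u⁻¹ • x) > 1`.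
  have hxD : u⁻¹ • x ∈ ⋂ i, D i := mem_iInter.2 fun i =>
    mem_of_forall_mem_pol_apply_le_one (hconv i) (hcl i) (h0 i) fun g hg => by
      simpa [inv_mul_le_one₀ hu, hψ] using (hψK _ (hpolK i g hg)).le
  have := hf _ hxD
  simp only [map_smul, smul_eq_mul, inv_mul_le_one₀ hu] at this
  rw [hψ] at hψf
  exact hψf.not_ge this

end Separation

lemma closure_add_closedBall_subset_s12 {E : Type*} [SeminormedAddCommGroup E] (A : Set E)
    {r s : ℝ} (hr : 0 ≤ r) (hrs : r < s) :
    closure (A + closedBall 0 r) ⊆ A + closedBall 0 s := by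
  calc closure (A + closedBall 0 r) ⊆ closure (A + ball 0 ((r + s) / 2)) :=
        closure_mono (add_subset_add_left (closedBall_subset_ball (by linarith)))
  _ ⊆ cthickening ((r + s) / 2) A := by
        rw [add_ball_zero]; exact closure_thickening_subset_cthickening _ _
  _ ⊆ thickening s A := cthickening_subset_thickening' (by linarith) (by linarith) A
  _ ⊆ A + closedBall 0 s := by
        rw [← add_ball_zero]; exact add_subset_add_left ball_subset_closedBall

section BallSum

variable {X : Type*} [NormedAddCommGroup X] [NormedSpace ℝ X]

lemma mul_norm_le_of_forall_mem_closedBall_apply_le {f : X →L[ℝ] ℝ} {r c : ℝ} (hr : 0 < r)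
    (h : ∀ b ∈ closedBall (0 : X) r, f b ≤ c) : r * ‖f‖ ≤ c := by
  have hc : 0 ≤ c := by simpa using h 0 (mem_closedBall_self hr.le)
  rw [← le_div_iff₀' hr]
  refine f.opNorm_le_of_unit_norm (div_nonneg hc hr.le) fun x hx => ?_
  have hmem : ∀ y : X, ‖y‖ = 1 → r • y ∈ closedBall (0 : X) r := fun y hy => by
    rw [mem_closedBall_zero_iff, norm_smul, hy, Real.norm_of_nonneg hr.le, mul_one]
  have h₁ := h _ (hmem x hx)
  have h₂ := h _ (hmem (-x) (by rwa [norm_neg]))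
  simp only [map_smul, map_neg, smul_eq_mul] at h₁ h₂
  rw [Real.norm_eq_abs, le_div_iff₀' hr]
  calc r * |f x| = |r * f x| := by rw [abs_mul, abs_of_pos hr]
  _ ≤ c := abs_le.2 ⟨by linarith, h₁⟩

lemma add_mul_norm_le_one_of_mem_pol_add_closedBall {C : Set X} {r : ℝ} (hr : 0 < r)
    {f : X →L[ℝ] ℝ} (hf : f ∈ pol (C + closedBall 0 r)) {a : X} (ha : a ∈ C) :
    f a + r * ‖f‖ ≤ 1 := by
  have := mul_norm_le_of_forall_mem_closedBall_apply_le (c := 1 - f a) hr fun b hb => by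
    linarith [map_add f a b ▸ hf _ (add_mem_add ha hb)]
  linarith

lemma pol_add_closedBall_subset_invSum {C : Set X} (h0 : (0 : X) ∈ C) {r : ℝ} (hr : 0 < r) :
    pol (C + closedBall 0 r) ⊆ invSum (pol C) (closedBall 0 r⁻¹) := by
  intro f hf
  have key : ∀ a ∈ C, f a + r * ‖f‖ ≤ 1 := fun a ha =>
    add_mul_norm_le_one_of_mem_pol_add_closedBall hr hf ha
  have hβ : r * ‖f‖ ≤ 1 := by simpa using key 0 h0
  rcases eq_or_ne f 0 with rfl | hf0
  · exact Or.inl (Or.inr ⟨zero_mem_pol C, zero_mem_recCone _⟩)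
  have hβ0 : 0 < r * ‖f‖ := mul_pos hr (norm_pos_iff.2 hf0)
  rcases hβ.eq_or_lt with hβ1 | hβ1
  · refine Or.inr ⟨?_, mem_recCone_pol fun a ha => by linarith [key a ha]⟩
    rw [mem_closedBall_zero_iff, ← one_div, le_div_iff₀' hr]
    exact hβ
  refine Or.inl (Or.inl (mem_iUnion₂.2 ⟨1 - r * ‖f‖, ⟨by linarith, by linarith⟩, ?_, ?_⟩))
  · refine ⟨(1 - r * ‖f‖)⁻¹ • f, fun a ha => ?_, smul_inv_smul₀ (by linarith) f⟩
    rw [smul_apply, smul_eq_mul, inv_mul_le_one₀ (by linarith)]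
    linarith [key a ha]
  · rw [sub_sub_cancel, smul_closedBall _ _ (inv_nonneg.2 hr.le), smul_zero,
      mem_closedBall_zero_iff, Real.norm_of_nonneg hβ0.le, mul_comm r,
      mul_inv_cancel_right₀ hr.ne']

end BallSum

theorem stmt12_general {X : Type*} [NormedAddCommGroup X] [NormedSpace ℝ X]
    {I : Type*} [Nonempty I] (A : I → Set X) (hconv : ∀ i, Convex ℝ (A i))
    (h0 : (0 : X) ∈ ⋂ i, A i)
    (η : ℝ)
    (h : (⋂ i, (A i + η • closedBall (0:X) 1)) ⊆ (⋂ i, A i) + closedBall (0:X) 1) :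
    ∀ ηhat : ℝ, 0 < ηhat → ηhat < η →
      invSum (closedBall (0 : X →L[ℝ] ℝ) 1) (wcl (convexHull ℝ (⋃ i, pol (A i)))) ⊆
        wcl (convexHull ℝ
          (⋃ i, invSum (pol (A i)) ((1 / ηhat) • closedBall (0 : X →L[ℝ] ℝ) 1))) := by
  intro e he heη
  set W := wcl (convexHull ℝ (⋃ i, pol (A i)))
  set D : I → Set X := fun i => closure (A i + closedBall 0 e)
  have hW : W ⊆ pol (⋂ i, A i) := wcl_subset_pol <|
    convexHull_min (iUnion_subset fun i => pol_anti (iInter_subset A i)) (convex_pol _)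
  have h0W : (0 : X →L[ℝ] ℝ) ∈ W := by
    show StrongDual.toWeakDual 0 ∈ closure _
    exact subset_closure
      ⟨0, subset_convexHull ℝ _ (mem_iUnion.2 ⟨Classical.arbitrary I, zero_mem_pol _⟩), rfl⟩
  have hD : ⋂ i, D i ⊆ closedBall 0 1 + ⋂ i, A i := by
    rw [add_comm]
    refine (iInter_mono fun i => ?_).trans h
    rw [smul_unitClosedBall_of_nonneg (he.trans heη).le]
    exact closure_add_closedBall_subset_s12 (A i) he.le heη
  have hDpol : ∀ i, pol (D i) ⊆ invSum (pol (A i)) ((1 / e) • closedBall 0 1) := fun i => by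
    rw [one_div, smul_unitClosedBall_of_nonneg (inv_nonneg.2 he.le)]
    exact (pol_anti subset_closure).trans
      (pol_add_closedBall_subset_invSum (mem_iInter.1 h0 i) he)
  calc invSum (closedBall 0 1) W ⊆ pol (closedBall 0 1 + ⋂ i, A i) :=
        invSum_subset_pol_add closedBall_subset_pol_closedBall hW
          (mem_closedBall_self zero_le_one) h0W
  _ ⊆ pol (⋂ i, D i) := pol_anti hD
  _ ⊆ wcl (convexHull ℝ (⋃ i, pol (D i))) :=
        pol_iInter_subset_wcl_convexHull D
          (fun i => ((hconv i).add (convex_closedBall 0 e)).closure) (fun _ => isClosed_closure)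
          fun i => subset_closure ⟨0, mem_iInter.1 h0 i, 0, mem_closedBall_self he.le, add_zero 0⟩
  _ ⊆ _ := wcl_mono (convexHull_mono (iUnion_mono hDpol))

theorem stmt12 {X : Type*} [NormedAddCommGroup X] [NormedSpace ℝ X] [CompleteSpace X]
    {I : Type*} [Nonempty I] (A : I → Set X) (hconv : ∀ i, Convex ℝ (A i))
    (h0 : (0 : X) ∈ ⋂ i, A i)
    (hcip : closure (⋂ i, A i) = ⋂ i, closure (A i))
    (η : ℝ) (hη : 0 < η)
    (h : (⋂ i, (A i + η • closedBall (0:X) 1)) ⊆ (⋂ i, A i) + closedBall (0:X) 1) :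
    ∀ ηhat : ℝ, 0 < ηhat → ηhat < η →
      invSum (closedBall (0 : X →L[ℝ] ℝ) 1) (wcl (convexHull ℝ (⋃ i, pol (A i)))) ⊆
        wcl (convexHull ℝ
          (⋃ i, invSum (pol (A i)) ((1 / ηhat) • closedBall (0 : X →L[ℝ] ℝ) 1))) :=
  stmt12_general A hconv h0 η h
end

section
/- Let {K_i : i ∈ I} be a family of convex cones in a Banach space X. Then {K_i} has the linear regularity property if and only if it has the normal property, and these hold if and only if {K_i} has the closed intersection property and there exists η > 0 such that {K_i°} has property (G_η). -/
/-!
All sets involved are cones, so distances scale linearly and a bound at one scale (the normal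
property) is a bound at every scale (linear regularity). For a convex cone `C` the distance has
the dual description `d(x, C) = sup {f x | f ∈ C^⊖, ‖f‖ ≤ 1}`, and by the bipolar theorem the
functionals nonpositive on `⋂ i, closure (K i)` form the weak* closure of the finite sums of the
`(K i)^⊖`. Under the closed intersection property these are exactly the `f ∈ (⋂ i, K i)^⊖`, and
`(G_η)` writes them as weak* limits of sums `Σ pᵢ` with `Σ ‖pᵢ‖ ≤ ‖f‖ / η`; since
`pᵢ x ≤ ‖pᵢ‖ d(x, K i)`, this is a linear bound of `d(x, ⋂ i, K i)` by `sup i, d(x, K i)`.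
Conversely, if some `f` escaped the weak* closure of those norm-bounded sums, a separating point
`x` would violate linear regularity.
-/

open Set Metric
open scoped Pointwise

lemma nonpos_of_forall_nonneg_mul_lt {a u : ℝ} (h : ∀ t : ℝ, 0 ≤ t → t * a < u) : a ≤ 0 := by
  by_contra! ha
  have := h ((|u| + 1) / a) (by positivity)
  rw [div_mul_cancel₀ _ ha.ne'] at this
  linarith [le_abs_self u]

section Metric

lemma closure_iInter_eq_of_linearRegular {α : Type*} [PseudoMetricSpace α] {I : Type*}
    {K : I → Set α} (hne : (⋂ i, K i).Nonempty) {γ : ℝ}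
    (hreg : ∀ x c, (∀ i, infDist x (K i) ≤ c) → infDist x (⋂ i, K i) ≤ γ * c) :
    closure (⋂ i, K i) = ⋂ i, closure (K i) := by
  refine (subset_iInter fun i => closure_mono (iInter_subset K i)).antisymm fun x hx => ?_
  have hdist : ∀ i, infDist x (K i) ≤ 0 := fun i => by
    rw [← infDist_closure, infDist_zero_of_mem (mem_iInter.1 hx i)]
  rw [mem_closure_iff_infDist_zero hne]
  exact le_antisymm (by simpa using hreg x 0 hdist) infDist_nonneg

variable {E : Type*} [SeminormedAddCommGroup E] {C : Set E}

lemma infDist_add_le_norm {k : E} (hk : k ∈ C) (b : E) : infDist (k + b) C ≤ ‖b‖ :=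
  (infDist_le_dist_of_mem hk).trans_eq (by rw [dist_eq_norm, add_sub_cancel_left])

lemma infDist_le_of_mem_add_closedBall {x : E} {r : ℝ} (hx : x ∈ C + closedBall 0 r) :
    infDist x C ≤ r := by
  obtain ⟨k, hk, b, hb, rfl⟩ := hx
  exact (infDist_add_le_norm hk b).trans (mem_closedBall_zero_iff.1 hb)

lemma mem_add_closedBall_of_infDist_lt (hC : C.Nonempty) {x : E} {r : ℝ} (h : infDist x C < r) :
    x ∈ C + closedBall 0 r := by
  obtain ⟨k, hk, hdk⟩ := (infDist_lt_iff hC).1 h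
  exact ⟨k, hk, x - k, mem_closedBall_zero_iff.2 (dist_eq_norm x k ▸ hdk.le), add_sub_cancel k x⟩

end Metric

section Dual

variable {X : Type*} [NormedAddCommGroup X] [NormedSpace ℝ X]

section WeakStar

lemma WeakDual.exists_apply_eq_eval (φ : StrongDual ℝ (WeakDual ℝ X)) :
    ∃ x : X, ∀ f : WeakDual ℝ X, φ f = f x := by
  obtain ⟨x, rfl⟩ := LinearMap.dualEmbedding_surjective (topDualPairing ℝ X) φ
  exact ⟨x, fun _ => rfl⟩

lemma subset_wcl (S : Set (X →L[ℝ] ℝ)) : S ⊆ wcl S := fun f hf =>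
  show StrongDual.toWeakDual f ∈ closure (StrongDual.toWeakDual '' S) from
    subset_closure (mem_image_of_mem _ hf)

lemma apply_le_of_mem_wcl {S : Set (X →L[ℝ] ℝ)} {x : X} {c : ℝ} (h : ∀ g ∈ S, g x ≤ c)
    {f : X →L[ℝ] ℝ} (hf : f ∈ wcl S) : f x ≤ c :=
  closure_minimal (by rintro _ ⟨g, hg, rfl⟩; exact h g hg)
    (isClosed_Iic.preimage (WeakDual.eval_continuous x)) hf

lemma exists_lt_apply_of_notMem_wcl {S : Set (X →L[ℝ] ℝ)} (hS : Convex ℝ S)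
    {f : X →L[ℝ] ℝ} (hf : f ∉ wcl S) : ∃ (x : X) (u : ℝ), (∀ g ∈ S, g x < u) ∧ u < f x := by
  have : LocallyConvexSpace ℝ (WeakDual ℝ X) := WeakBilin.locallyConvexSpace
  let e := StrongDual.toWeakDual (𝕜 := ℝ) (E := X)
  have hconv : Convex ℝ (closure (e '' S)) := (hS.linear_image e.toLinearMap).closure
  obtain ⟨φ, u, hu, huf⟩ := geometric_hahn_banach_closed_point hconv isClosed_closure hf
  obtain ⟨x, hx⟩ := WeakDual.exists_apply_eq_eval φ
  exact ⟨x, u, fun g hg => hx (e g) ▸ hu _ (subset_closure (mem_image_of_mem _ hg)),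
    hx (e f) ▸ huf⟩

end WeakStar

section Cone

variable {C : Set X}

lemma zero_mem_dCone (A : Set X) : (0 : X →L[ℝ] ℝ) ∈ dCone A := fun _ _ => le_rfl

lemma smul_mem_dCone {A : Set X} {t : ℝ} (ht : 0 ≤ t) {f : X →L[ℝ] ℝ} (hf : f ∈ dCone A) :
    t • f ∈ dCone A :=
  fun x hx => mul_nonpos_of_nonneg_of_nonpos ht (hf x hx)

lemma convex_dCone (A : Set X) : Convex ℝ (dCone A) :=
  fun _ hf _ hg _ _ ha hb _ x hx =>
    add_nonpos (mul_nonpos_of_nonneg_of_nonpos ha (hf x hx))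
      (mul_nonpos_of_nonneg_of_nonpos hb (hg x hx))

lemma dCone_subset_dCone_closure (A : Set X) : dCone A ⊆ dCone (closure A) :=
  fun f hf => closure_minimal hf (isClosed_Iic.preimage f.continuous)

lemma convex_of_smul_subset_of_add_subset (hsmul : ∀ t : ℝ, 0 ≤ t → t • C ⊆ C)
    (hadd : C + C ⊆ C) : Convex ℝ C :=
  fun _ hy _ hz a b ha hb _ =>
    hadd (add_mem_add (hsmul a ha (smul_mem_smul_set hy)) (hsmul b hb (smul_mem_smul_set hz)))

lemma iInter_smul_subset {I : Type*} {K : I → Set X} (hsmul : ∀ i, ∀ t : ℝ, 0 ≤ t → t • K i ⊆ K i)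
    (t : ℝ) (ht : 0 ≤ t) : t • ⋂ i, K i ⊆ ⋂ i, K i :=
  (smul_set_iInter_subset t K).trans (iInter_mono fun i => hsmul i t ht)

lemma infDist_smul_of_smul_subset (hsmul : ∀ t : ℝ, 0 ≤ t → t • C ⊆ C) {t : ℝ} (ht : 0 < t)
    (x : X) : infDist (t • x) C = t * infDist x C := by
  have hC : t • C = C := (hsmul t ht.le).antisymm fun k hk =>
    ⟨t⁻¹ • k, hsmul _ (inv_nonneg.2 ht.le) (smul_mem_smul_set hk), smul_inv_smul₀ ht.ne' k⟩
  calc infDist (t • x) C = infDist (t • x) (t • C) := by rw [hC]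
    _ = t * infDist x C := by rw [infDist_smul₀ ht.ne', Real.norm_of_nonneg ht.le]

lemma apply_le_norm_mul_infDist (hC : C.Nonempty) {f : X →L[ℝ] ℝ} (hf : f ∈ dCone C) (x : X) :
    f x ≤ ‖f‖ * infDist x C := by
  have := hC.to_subtype
  rw [infDist_eq_iInf, Real.mul_iInf_of_nonneg (norm_nonneg f)]
  refine le_ciInf fun k => ?_
  calc f x = f (x - k) + f k := by rw [← map_add, sub_add_cancel]
    _ ≤ ‖f‖ * ‖x - k‖ + 0 := add_le_add ((Real.le_norm_self _).trans (f.le_opNorm _)) (hf k k.2)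
    _ = ‖f‖ * dist x k := by rw [add_zero, dist_eq_norm]

lemma exists_dCone_le_apply_of_lt_infDist (hC : Convex ℝ C)
    (hsmul : ∀ t : ℝ, 0 ≤ t → t • C ⊆ C) (h0 : (0 : X) ∈ C) {x : X} {r : ℝ} (hr : 0 < r)
    (h : r < infDist x C) : ∃ f ∈ dCone C, ‖f‖ ≤ 1 ∧ r ≤ f x := by
  have hx : x ∉ C + ball 0 (infDist x C) := by
    rintro ⟨k, hk, b, hb, rfl⟩
    exact (infDist_add_le_norm hk b).not_gt (mem_ball_zero_iff.1 hb)
  obtain ⟨f, hf⟩ :=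
    geometric_hahn_banach_open_point (hC.add (convex_ball 0 _)) isOpen_ball.add_left hx
  have hfC : f ∈ dCone C := fun c hc => nonpos_of_forall_nonneg_mul_lt fun t ht => by
    simpa using hf (t • c + 0)
      (add_mem_add (hsmul t ht (smul_mem_smul_set hc)) (mem_ball_self (hr.trans h)))
  have hlt : ∀ z ∈ closedBall (0 : X) r, f z < f x := fun z hz => by
    simpa using hf (0 + z) (add_mem_add h0 (closedBall_subset_ball h hz))
  have hball : ∀ z ∈ closedBall (0 : X) r, ‖f z‖ ≤ f x := fun z hz => by
    have := hlt (-z) (by simpa using hz)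
    rw [map_neg] at this
    exact abs_le.2 ⟨by linarith, (hlt z hz).le⟩
  have hnorm : ‖f‖ * r ≤ f x := (le_div_iff₀ hr).1 (f.opNorm_bound_of_ball_bound hr _ hball)
  have hf0 : 0 < ‖f‖ := norm_pos_iff.2 fun hf0 => by
    simpa [hf0] using hlt 0 (mem_closedBall_self hr.le)
  refine ⟨‖f‖⁻¹ • f, smul_mem_dCone (by positivity) hfC, ?_, ?_⟩
  · rw [norm_smul, norm_inv, norm_norm, inv_mul_cancel₀ hf0.ne']
  · show r ≤ ‖f‖⁻¹ * f x
    rw [le_inv_mul_iff₀ hf0]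
    linarith

lemma infDist_le_of_forall_dCone (hC : Convex ℝ C) (hsmul : ∀ t : ℝ, 0 ≤ t → t • C ⊆ C)
    (h0 : (0 : X) ∈ C) {x : X} {r : ℝ} (h : ∀ f ∈ dCone C, ‖f‖ ≤ 1 → f x ≤ r) :
    infDist x C ≤ r := by
  have hr : 0 ≤ r := by simpa using h 0 (zero_mem_dCone C) (by simp)
  refine le_of_forall_lt_imp_le_of_dense fun s hs => ?_
  rcases le_or_gt s 0 with hs0 | hs0
  · exact hs0.trans hr
  · obtain ⟨f, hf, hf1, hsf⟩ := exists_dCone_le_apply_of_lt_infDist hC hsmul h0 hs0 hs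
    exact hsf.trans (h f hf hf1)

lemma mem_closure_of_forall_dCone (hC : Convex ℝ C) (hsmul : ∀ t : ℝ, 0 ≤ t → t • C ⊆ C)
    (h0 : (0 : X) ∈ C) {x : X} (h : ∀ f ∈ dCone C, f x ≤ 0) : x ∈ closure C := by
  rw [mem_closure_iff_infDist_zero ⟨0, h0⟩]
  exact le_antisymm (infDist_le_of_forall_dCone hC hsmul h0 fun f hf _ => h f hf) infDist_nonneg

end Cone

section FiniteSums

variable {I : Type*}

def boundedFinSums (P : I → Set (X →L[ℝ] ℝ)) (β : ℝ) : Set (X →L[ℝ] ℝ) :=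
  {g | ∃ (s : Finset I) (x : I → (X →L[ℝ] ℝ)),
    (∀ i ∈ s, x i ∈ P i) ∧ g = ∑ i ∈ s, x i ∧ ∑ i ∈ s, ‖x i‖ ≤ β}

variable {P : I → Set (X →L[ℝ] ℝ)}

lemma propG_iff {η : ℝ} :
    propG P η ↔ ∀ f ∈ wcl (finSums P), f ∈ wcl (boundedFinSums P (1 / η * ‖f‖)) :=
  Iff.rfl

lemma zero_mem_finSums : (0 : X →L[ℝ] ℝ) ∈ finSums P := ⟨∅, 0, by simp, by simp⟩

lemma mem_finSums_of_mem {i : I} {p : X →L[ℝ] ℝ} (hp : p ∈ P i) : p ∈ finSums P :=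
  ⟨{i}, fun _ => p, by simpa using hp, by simp⟩

lemma zero_mem_boundedFinSums {β : ℝ} (hβ : 0 ≤ β) : (0 : X →L[ℝ] ℝ) ∈ boundedFinSums P β :=
  ⟨∅, 0, by simp, by simp, by simpa using hβ⟩

lemma mem_boundedFinSums_of_mem {i : I} {p : X →L[ℝ] ℝ} (hp : p ∈ P i) {β : ℝ} (hβ : ‖p‖ ≤ β) :
    p ∈ boundedFinSums P β :=
  ⟨{i}, fun _ => p, by simpa using hp, by simp, by simpa using hβ⟩

lemma boundedFinSums_mono (P : I → Set (X →L[ℝ] ℝ)) : Monotone (boundedFinSums P) :=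
  fun _ _ h _ ⟨s, x, hx, hg, hβ⟩ => ⟨s, x, hx, hg, hβ.trans h⟩

lemma finSums_eq_iUnion_boundedFinSums (P : I → Set (X →L[ℝ] ℝ)) :
    finSums P = ⋃ β, boundedFinSums P β := by
  ext g
  simp only [finSums, boundedFinSums, mem_iUnion, mem_ofPred_eq]
  exact ⟨fun ⟨s, x, hx, hg⟩ => ⟨_, s, x, hx, hg, le_rfl⟩,
    fun ⟨_, s, x, hx, hg, _⟩ => ⟨s, x, hx, hg⟩⟩

lemma convex_boundedFinSums (hP : ∀ i, Convex ℝ (P i)) (hP0 : ∀ i, (0 : X →L[ℝ] ℝ) ∈ P i)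
    (β : ℝ) : Convex ℝ (boundedFinSums P β) := by
  classical
  rintro _ ⟨s, x, hx, rfl, hxβ⟩ _ ⟨t, y, hy, rfl, hyβ⟩ a b ha hb hab
  let x' i := if i ∈ s then x i else 0
  let y' i := if i ∈ t then y i else 0
  have hx' : ∀ i, x' i ∈ P i := fun i => by by_cases h : i ∈ s <;> simp [x', h, hx, hP0]
  have hy' : ∀ i, y' i ∈ P i := fun i => by by_cases h : i ∈ t <;> simp [y', h, hy, hP0]
  refine ⟨s ∪ t, fun i => a • x' i + b • y' i, fun i _ => hP i (hx' i) (hy' i) ha hb hab,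
    ?_, ?_⟩
  · simp only [Finset.sum_add_distrib, ← Finset.smul_sum, x', y', Finset.sum_ite_mem,
      Finset.union_inter_cancel_left, Finset.union_inter_cancel_right]
  · calc ∑ i ∈ s ∪ t, ‖a • x' i + b • y' i‖ ≤ ∑ i ∈ s ∪ t, (a * ‖x' i‖ + b * ‖y' i‖) :=
          Finset.sum_le_sum fun i _ => (norm_add_le _ _).trans_eq <| by
            rw [norm_smul, norm_smul, Real.norm_of_nonneg ha, Real.norm_of_nonneg hb]
      _ = a * ∑ i ∈ s, ‖x i‖ + b * ∑ i ∈ t, ‖y i‖ := by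
          simp only [Finset.sum_add_distrib, ← Finset.mul_sum, x', y', apply_ite norm,
            norm_zero, Finset.sum_ite_mem, Finset.union_inter_cancel_left,
            Finset.union_inter_cancel_right]
      _ ≤ a * β + b * β := by gcongr
      _ = β := by rw [← add_mul, hab, one_mul]

lemma convex_finSums (hP : ∀ i, Convex ℝ (P i)) (hP0 : ∀ i, (0 : X →L[ℝ] ℝ) ∈ P i) :
    Convex ℝ (finSums P) := by
  rw [finSums_eq_iUnion_boundedFinSums]
  exact (boundedFinSums_mono P).directed_le.convex_iUnion fun β => convex_boundedFinSums hP hP0 β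

end FiniteSums

section Family

variable {I : Type*} {K : I → Set X}

lemma apply_le_of_mem_boundedFinSums_dCone (h0 : ∀ i, (0 : X) ∈ K i) {x : X} {r β : ℝ}
    (hr : 0 ≤ r) (hx : ∀ i, infDist x (K i) ≤ r) {g : X →L[ℝ] ℝ}
    (hg : g ∈ boundedFinSums (fun i => dCone (K i)) β) : g x ≤ β * r := by
  obtain ⟨s, p, hp, rfl, hβ⟩ := hg
  calc (∑ i ∈ s, p i) x = ∑ i ∈ s, p i x := sum_apply _ _ _
    _ ≤ ∑ i ∈ s, ‖p i‖ * r := Finset.sum_le_sum fun i hi =>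
        (apply_le_norm_mul_infDist ⟨0, h0 i⟩ (hp i hi) x).trans (by gcongr; exact hx i)
    _ = (∑ i ∈ s, ‖p i‖) * r := (Finset.sum_mul _ _ _).symm
    _ ≤ β * r := by gcongr

lemma wcl_finSums_dCone_subset : wcl (finSums fun i => dCone (K i)) ⊆ dCone (⋂ i, K i) := by
  intro f hf y hy
  refine apply_le_of_mem_wcl ?_ hf
  rintro _ ⟨s, p, hp, rfl⟩
  rw [sum_apply]
  exact Finset.sum_nonpos fun i hi => hp i hi y (mem_iInter.1 hy i)

lemma mem_wcl_finSums_dCone (hK : ∀ i, Convex ℝ (K i))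
    (hsmul : ∀ i, ∀ t : ℝ, 0 ≤ t → t • K i ⊆ K i) (h0 : ∀ i, (0 : X) ∈ K i) {f : X →L[ℝ] ℝ}
    (hf : ∀ x, (∀ i, x ∈ closure (K i)) → f x ≤ 0) :
    f ∈ wcl (finSums fun i => dCone (K i)) := by
  by_contra hnot
  obtain ⟨x, u, hu, hux⟩ := exists_lt_apply_of_notMem_wcl
    (convex_finSums (fun i => convex_dCone _) fun i => zero_mem_dCone _) hnot
  have hxK : ∀ i, x ∈ closure (K i) := fun i =>
    mem_closure_of_forall_dCone (hK i) (hsmul i) (h0 i) fun p hp =>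
      nonpos_of_forall_nonneg_mul_lt fun t ht => hu _ (mem_finSums_of_mem (smul_mem_dCone ht hp))
  have hu0 : 0 < u := by simpa using hu 0 zero_mem_finSums
  linarith [hf x hxK]

lemma normal_of_linearRegular (h0 : ∀ i, (0 : X) ∈ K i) {γ : ℝ} (hγ : 0 < γ)
    (hreg : ∀ x c, (∀ i, infDist x (K i) ≤ c) → infDist x (⋂ i, K i) ≤ γ * c) :
    ⋂ i, (K i + (1 / (2 * γ)) • closedBall (0 : X) 1) ⊆ (⋂ i, K i) + closedBall 0 1 := by
  intro x hx
  rw [smul_unitClosedBall_of_nonneg (by positivity)] at hx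
  refine mem_add_closedBall_of_infDist_lt ⟨0, mem_iInter.2 h0⟩ ?_
  calc infDist x (⋂ i, K i) ≤ γ * (1 / (2 * γ)) :=
        hreg x _ fun i => infDist_le_of_mem_add_closedBall (mem_iInter.1 hx i)
    _ < 1 := by field_simp; norm_num

lemma infDist_iInter_le_of_normal [Nonempty I] (hsmul : ∀ i, ∀ t : ℝ, 0 ≤ t → t • K i ⊆ K i)
    (h0 : ∀ i, (0 : X) ∈ K i) {η : ℝ} (hη : 0 < η)
    (hN : ⋂ i, (K i + η • closedBall (0 : X) 1) ⊆ (⋂ i, K i) + closedBall 0 1)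
    (x : X) (c : ℝ) (hc : ∀ i, infDist x (K i) ≤ c) : infDist x (⋂ i, K i) ≤ 1 / η * c := by
  have hc0 : 0 ≤ c := infDist_nonneg.trans (hc (Classical.arbitrary I))
  refine le_of_forall_gt_imp_ge_of_dense fun t ht => ?_
  have htpos : 0 < t := lt_of_le_of_lt (by positivity) ht
  have hy : t⁻¹ • x ∈ ⋂ i, (K i + η • closedBall (0 : X) 1) := by
    refine mem_iInter.2 fun i => ?_
    rw [smul_unitClosedBall_of_nonneg hη.le]
    refine mem_add_closedBall_of_infDist_lt ⟨0, h0 i⟩ ?_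
    rw [infDist_smul_of_smul_subset (hsmul i) (inv_pos.2 htpos), inv_mul_lt_iff₀ htpos]
    calc infDist x (K i) ≤ c := hc i
      _ < t * η := by rwa [one_div_mul_eq_div, div_lt_iff₀ hη] at ht
  calc infDist x (⋂ i, K i) = t * infDist (t⁻¹ • x) (⋂ i, K i) := by
        rw [← infDist_smul_of_smul_subset (iInter_smul_subset hsmul) htpos,
          smul_inv_smul₀ htpos.ne']
    _ ≤ t * 1 := by gcongr; exact infDist_le_of_mem_add_closedBall (hN hy)
    _ = t := mul_one t

lemma propG_of_linearRegular (hsmul : ∀ i, ∀ t : ℝ, 0 ≤ t → t • K i ⊆ K i)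
    (hK : ∀ i, Convex ℝ (K i)) (h0 : ∀ i, (0 : X) ∈ K i) {η : ℝ} (hη : 0 < η)
    (hreg : ∀ x c, (∀ i, infDist x (K i) ≤ c) → infDist x (⋂ i, K i) ≤ 1 / η * c) :
    propG (fun i => dCone (K i)) η := by
  refine propG_iff.2 fun f hf => ?_
  set β := 1 / η * ‖f‖
  rcases eq_or_ne f 0 with rfl | hf0
  · exact subset_wcl _ (zero_mem_boundedFinSums (by simp [β]))
  have hβ : 0 < β := by positivity
  by_contra hnot
  obtain ⟨x, u, hu, hux⟩ := exists_lt_apply_of_notMem_wcl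
    (convex_boundedFinSums (fun i => convex_dCone _) (fun i => zero_mem_dCone _) β) hnot
  have hdist : ∀ i, infDist x (K i) ≤ u / β := fun i =>
    infDist_le_of_forall_dCone (hK i) (hsmul i) (h0 i) fun p hp hp1 => by
      have hβp : ‖β • p‖ ≤ β := by
        rw [norm_smul, Real.norm_of_nonneg hβ.le]
        exact mul_le_of_le_one_right hβ.le hp1
      have := hu _ <|
        mem_boundedFinSums_of_mem (P := fun i => dCone (K i)) (smul_mem_dCone hβ.le hp) hβp
      rw [le_div_iff₀ hβ, mul_comm]
      exact this.le
  have : f x ≤ u := calc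
    f x ≤ ‖f‖ * infDist x (⋂ i, K i) :=
      apply_le_norm_mul_infDist ⟨0, mem_iInter.2 h0⟩ (wcl_finSums_dCone_subset hf) x
    _ ≤ ‖f‖ * (1 / η * (u / β)) := by gcongr; exact hreg x _ hdist
    _ = u := by simp only [β]; field_simp
  linarith

lemma normal_of_propG (hsmul : ∀ i, ∀ t : ℝ, 0 ≤ t → t • K i ⊆ K i)
    (hK : ∀ i, Convex ℝ (K i)) (h0 : ∀ i, (0 : X) ∈ K i)
    (hCI : closure (⋂ i, K i) = ⋂ i, closure (K i)) {η : ℝ} (hη : 0 < η)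
    (hG : propG (fun i => dCone (K i)) η) :
    ⋂ i, (K i + (η / 2) • closedBall (0 : X) 1) ⊆ (⋂ i, K i) + closedBall 0 1 := by
  intro x hx
  rw [smul_unitClosedBall_of_nonneg (by positivity)] at hx
  have hxK : ∀ i, infDist x (K i) ≤ η / 2 := fun i =>
    infDist_le_of_mem_add_closedBall (mem_iInter.1 hx i)
  refine mem_add_closedBall_of_infDist_lt ⟨0, mem_iInter.2 h0⟩ (lt_of_le_of_lt ?_ one_half_lt_one)
  refine infDist_le_of_forall_dCone (convex_iInter hK) (iInter_smul_subset hsmul)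
    (mem_iInter.2 h0) fun f hf hf1 => ?_
  have hf' : f ∈ wcl (finSums fun i => dCone (K i)) :=
    mem_wcl_finSums_dCone hK hsmul h0 fun y hy =>
      dCone_subset_dCone_closure _ hf y (hCI ▸ mem_iInter.2 hy)
  refine apply_le_of_mem_wcl (fun g hg => ?_) (propG_iff.1 hG f hf')
  calc g x ≤ 1 / η * ‖f‖ * (η / 2) :=
        apply_le_of_mem_boundedFinSums_dCone h0 (by positivity) hxK hg
    _ = ‖f‖ / 2 := by field_simp
    _ ≤ 1 / 2 := by gcongr

end Family

end Dual

theorem stmt18_general {X : Type*} [NormedAddCommGroup X] [NormedSpace ℝ X]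
    {I : Type*} [Nonempty I] (K : I → Set X)
    (hcone_smul : ∀ i, ∀ t : ℝ, 0 ≤ t → t • K i ⊆ K i)
    (hcone_add : ∀ i, K i + K i ⊆ K i) (h0 : ∀ i, (0 : X) ∈ K i) :
    ((∃ γ > (0:ℝ), ∀ x : X, ∀ c : ℝ,
        (∀ i, infDist x (K i) ≤ c) → infDist x (⋂ i, K i) ≤ γ * c) ↔
      (∃ η > (0:ℝ),
        (⋂ i, (K i + η • closedBall (0:X) 1)) ⊆ (⋂ i, K i) + closedBall (0:X) 1)) ∧
    ((∃ η > (0:ℝ),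
        (⋂ i, (K i + η • closedBall (0:X) 1)) ⊆ (⋂ i, K i) + closedBall (0:X) 1) ↔
      (closure (⋂ i, K i) = (⋂ i, closure (K i)) ∧
        ∃ η > (0:ℝ), propG (fun i => dCone (K i)) η)) := by
  have hK : ∀ i, Convex ℝ (K i) := fun i =>
    convex_of_smul_subset_of_add_subset (hcone_smul i) (hcone_add i)
  refine ⟨⟨fun ⟨γ, hγ, hreg⟩ => ⟨_, by positivity, normal_of_linearRegular h0 hγ hreg⟩,
      fun ⟨η, hη, hN⟩ => ⟨1 / η, by positivity, infDist_iInter_le_of_normal hcone_smul h0 hη hN⟩⟩,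
    fun ⟨η, hη, hN⟩ => ?_,
    fun ⟨hCI, η, hη, hG⟩ => ⟨η / 2, by positivity, normal_of_propG hcone_smul hK h0 hCI hη hG⟩⟩
  have hreg := infDist_iInter_le_of_normal hcone_smul h0 hη hN
  exact ⟨closure_iInter_eq_of_linearRegular ⟨0, mem_iInter.2 h0⟩ hreg, η, hη,
    propG_of_linearRegular hcone_smul hK h0 hη hreg⟩

theorem stmt18 {X : Type*} [NormedAddCommGroup X] [NormedSpace ℝ X] [CompleteSpace X]
    {I : Type*} [Nonempty I] (K : I → Set X)
    (hcone_smul : ∀ i, ∀ t : ℝ, 0 ≤ t → t • K i ⊆ K i)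
    (hcone_add : ∀ i, K i + K i ⊆ K i) (h0 : ∀ i, (0 : X) ∈ K i) :
    ((∃ γ > (0:ℝ), ∀ x : X, ∀ c : ℝ,
        (∀ i, infDist x (K i) ≤ c) → infDist x (⋂ i, K i) ≤ γ * c) ↔
      (∃ η > (0:ℝ),
        (⋂ i, (K i + η • closedBall (0:X) 1)) ⊆ (⋂ i, K i) + closedBall (0:X) 1)) ∧
    ((∃ η > (0:ℝ),
        (⋂ i, (K i + η • closedBall (0:X) 1)) ⊆ (⋂ i, K i) + closedBall (0:X) 1) ↔
      (closure (⋂ i, K i) = (⋂ i, closure (K i)) ∧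
        ∃ η > (0:ℝ), propG (fun i => dCone (K i)) η)) :=
  stmt18_general K hcone_smul hcone_add h0
end
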